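/- If G is a conservative field for f : ℝⁿ → ℝ (locally Lipschitz) and also a conservative field for g : ℝⁿ → ℝ (locally Lipschitz), then f - g is constant on ℝⁿ. -/

import Mathlib

open Set MeasureTheory
open scoped RealInnerProductSpace

/-- A set-valued map is locally bounded if every point has a neighborhood with bounded image. -/
def LocBdd {n : ℕ} (G : EuclideanSpace ℝ (Fin n) → Set (EuclideanSpace ℝ (Fin n))) : Prop :=
  ∀ x, ∃ U ∈ nhds x, Bornology.IsBounded (⋃ y ∈ U, G y)

/-- `x'` is an integrable derivative representation of the absolutely continuous
curve `x : [0,1] → ℝⁿ`. -/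
def IsACCurve {n : ℕ} (x x' : ℝ → EuclideanSpace ℝ (Fin n)) : Prop :=
  IntervalIntegrable x' volume 0 1 ∧
    ∀ t ∈ Icc (0:ℝ) 1, x t = x 0 + ∫ s in (0:ℝ)..t, x' s

/-- Conservative field for a function `f` (Definition 1 of the paper). -/
def IsConservativeField {n : ℕ} (f : EuclideanSpace ℝ (Fin n) → ℝ)
    (G : EuclideanSpace ℝ (Fin n) → Set (EuclideanSpace ℝ (Fin n))) : Prop :=
  (∀ x, (G x).Nonempty) ∧
  IsClosed {p : EuclideanSpace ℝ (Fin n) × EuclideanSpace ℝ (Fin n) | p.2 ∈ G p.1} ∧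
  LocBdd G ∧
  ∀ (x x' : ℝ → EuclideanSpace ℝ (Fin n)), IsACCurve x x' →
    ∀ᵐ t ∂ (volume.restrict (Icc (0:ℝ) 1)),
      ∀ v ∈ G (x t), HasDerivAt (fun s => f (x s)) ⟪x' t, v⟫ t

/-!
Join `y` to `x` by the segment `c t = y + t • (x - y)`, an absolutely continuous curve. Choosing
any `v ∈ G (c t)`, both `f ∘ c` and `g ∘ c` have derivative `⟪x - y, v⟫` at almost every `t`, so
`f ∘ c - g ∘ c` has derivative `0` almost everywhere on `[0, 1]`. Being locally Lipschitz, it is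
absolutely continuous on `[0, 1]`, hence constant there, and `f x - g x = f y - g y`.
-/

theorem LocallyLipschitz.absolutelyContinuousOnInterval {X : Type*} [PseudoMetricSpace X]
    {h : ℝ → X} (hh : LocallyLipschitz h) (a b : ℝ) : AbsolutelyContinuousOnInterval h a b := by
  obtain ⟨K, hK⟩ := hh.locallyLipschitzOn.exists_lipschitzOnWith_of_compact isCompact_uIcc
  exact hK.absolutelyContinuousOnInterval

theorem LocallyLipschitz.eq_of_ae_hasDerivAt_zero {F : Type*} [NormedAddCommGroup F]
    [NormedSpace ℝ F] {h : ℝ → F} (hh : LocallyLipschitz h) {a b : ℝ}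
    (h₀ : ∀ᵐ t, t ∈ uIcc a b → HasDerivAt h 0 t) : h a = h b := by
  obtain ⟨C, hC⟩ := (hh.absolutelyContinuousOnInterval a b).const_of_ae_hasDerivAt_zero h₀
  rw [hC a left_mem_uIcc, hC b right_mem_uIcc]

theorem lipschitzWith_segment {E : Type*} [SeminormedAddCommGroup E] [NormedSpace ℝ E] (x y : E) :
    LipschitzWith ‖x - y‖₊ (fun t : ℝ => y + t • (x - y)) := by
  refine LipschitzWith.of_dist_le_mul fun s t => ?_
  rw [dist_add_left, dist_eq_norm, ← sub_smul, norm_smul, Real.norm_eq_abs, coe_nnnorm,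
    mul_comm, ← Real.dist_eq]

section

variable {n : ℕ}

theorem isACCurve_segment (x y : EuclideanSpace ℝ (Fin n)) :
    IsACCurve (fun t : ℝ => y + t • (x - y)) (fun _ => x - y) :=
  ⟨intervalIntegrable_const, fun t _ => by simp [intervalIntegral.integral_const, smul_sub]⟩

theorem IsConservativeField.ae_hasDerivAt_sub_eq_zero {f g : EuclideanSpace ℝ (Fin n) → ℝ}
    {G : EuclideanSpace ℝ (Fin n) → Set (EuclideanSpace ℝ (Fin n))}
    (hGf : IsConservativeField f G) (hGg : IsConservativeField g G)
    {c c' : ℝ → EuclideanSpace ℝ (Fin n)} (hc : IsACCurve c c') :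
    ∀ᵐ t ∂volume.restrict (Icc (0:ℝ) 1), HasDerivAt (fun s => f (c s) - g (c s)) 0 t := by
  filter_upwards [hGf.2.2.2 c c' hc, hGg.2.2.2 c c' hc] with t hft hgt
  obtain ⟨v, hv⟩ := hGf.1 (c t)
  have hsub := (hft v hv).sub (hgt v hv)
  rwa [sub_self] at hsub

end

/-- If `G` is a conservative field for both `f` and `g`, then `f - g` is constant. -/
theorem stmt7 {n : ℕ} (f g : EuclideanSpace ℝ (Fin n) → ℝ)
    (hf : LocallyLipschitz f) (hg : LocallyLipschitz g)
    (G : EuclideanSpace ℝ (Fin n) → Set (EuclideanSpace ℝ (Fin n)))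
    (hGf : IsConservativeField f G) (hGg : IsConservativeField g G) :
    ∀ x y : EuclideanSpace ℝ (Fin n), f x - g x = f y - g y := by
  intro x y
  set c : ℝ → EuclideanSpace ℝ (Fin n) := fun t => y + t • (x - y)
  have hc : LocallyLipschitz c := (lipschitzWith_segment x y).locallyLipschitz
  have hderiv := hGf.ae_hasDerivAt_sub_eq_zero hGg (isACCurve_segment x y)
  rw [ae_restrict_iff' measurableSet_Icc] at hderiv
  have hconst := ((hf.comp hc).sub (hg.comp hc)).eq_of_ae_hasDerivAt_zero (a := 0) (b := 1)
    (by simpa [uIcc_of_le zero_le_one] using hderiv)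
  simpa [c] using hconst.symm
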